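/- Let Ω be a parabolic uniformly rectifiable domain and let γ, γ̃ denote the L² beta-number functions of ∂Ω and of a comparison boundary ∂Ω̃ respectively. Suppose E ⊂ ∂Ω̃ ∩ Δ_1(0,0) is closed with σ(Δ_1(0,0) \ E) small, {Q_i} is a parabolic Whitney decomposition of ℝ^{n+1} \ E with parabolic diameters r_i, and ξ(Q,τ,ρ) = {i : Q̄_i ∩ Δ_ρ(Q,τ) ≠ ∅}. Then for (Q,τ) ∈ E and 0 < ρ < 1/2: γ(Q,τ,ρ) ≤ c(n) ( γ̃(Q,τ, 3ρ/2) + Σ_{i ∈ ξ(Q,τ,ρ)} (r_i/ρ)^{n+3} ). -/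

import Mathlib

open MeasureTheory Real Set Filter Topology
open scoped ENNReal NNReal BigOperators

noncomputable section

abbrev Pt (n : ℕ) := EuclideanSpace ℝ (Fin n) × ℝ

/-- Real inner product on `ℝ^n`. -/
def ip {n : ℕ} (x y : EuclideanSpace ℝ (Fin n)) : ℝ := inner ℝ x y

/-- Parabolic distance between points of `ℝ^n × ℝ`. -/
def pdist {n : ℕ} (p q : Pt n) : ℝ := dist p.1 q.1 + Real.sqrt |p.2 - q.2|

/-- The parabolic cylinder of radius `R` centered at `c`. -/
def pcyl {n : ℕ} (c : Pt n) (R : ℝ) : Set (Pt n) :=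
  {p | dist p.1 c.1 < R ∧ |p.2 - c.2| < R ^ 2}

/-- `σm` is Ahlfors regular (of parabolic dimension `n+1`) on `∂Ω` with constant `M`. -/
def Ahlfors {n : ℕ} (σm : Measure (Pt n)) (Ω : Set (Pt n)) (M : ℝ) : Prop :=
  ∀ Q ∈ frontier Ω, ∀ R : ℝ, 0 < R →
    ENNReal.ofReal ((R / 2) ^ (n + 1)) ≤ σm (pcyl Q R ∩ frontier Ω) ∧
      σm (pcyl Q R ∩ frontier Ω) ≤ ENNReal.ofReal (M * R ^ (n + 1))

/-- The `L²` beta number `γ(p, r)` (extended-real valued): infimum over `n`-planes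
through `p` containing the time direction (encoded by their spatial unit normal) of the
normalized squared distance of `∂Ω ∩ C_r(p)` to the plane. -/
def gammaE {n : ℕ} (σm : Measure (Pt n)) (Ω : Set (Pt n)) (p : Pt n) (r : ℝ) : ℝ≥0∞ :=
  ⨅ ν : Metric.sphere (0 : EuclideanSpace ℝ (Fin n)) 1,
    (ENNReal.ofReal (r ^ (n + 3)))⁻¹ *
      ∫⁻ q in pcyl p r ∩ frontier Ω,
        ENNReal.ofReal ((ip (q.1 - p.1) (ν : EuclideanSpace ℝ (Fin n))) ^ 2) ∂σm

/-!
Fix a unit normal `ν` and let `g x = |⟨x - Q, ν⟩|`, which is `1`-Lipschitz for the parabolic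
distance and vanishes at `Q`; it suffices to compare `∫ g²` over `Δ_ρ(Q)` and over
`Δ̃_{3ρ/2}(Q)`. On `Δ_ρ(Q) ∩ E` the two boundaries and their measures agree. A point
`x ∈ Δ_ρ(Q) \ E` lies in some closed Whitney cube `Q̄_i`. If `E` stays at distance at least
`g x / 16` from `x`, then `g x ≲ r_i` because `Q̄_i` lies within `≲ r_i` of `E`, and Ahlfors
regularity of `σ` turns this into a contribution `≲ r_i^{n+3}` of the cube. Otherwise a point of
`E ⊆ ∂Ω̃` lies within `g x / 16` of `x`, so a surface ball of `∂Ω̃` of radius `≈ g x`, on which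
`g ≥ 7 g x / 8`, carries `σ̃`-measure `≳ (g x)^{n+1}`. Hence `g(x)² ≲ ∫ k(x, y) g(y)² dσ̃(y)` for
the kernel `k(x, ·) = (g x / 8)^{-(n+1)} 1_{pdist(x, ·) < g x / 8}`; since `g x ≈ g y` on its
support, Ahlfors regularity of `σ` bounds `∫ k(x, y) dσ(x)` uniformly in `y`, and Tonelli's
theorem concludes.
-/

variable {n : ℕ}

theorem pdist_nonneg (p q : Pt n) : 0 ≤ pdist p q :=
  add_nonneg dist_nonneg (Real.sqrt_nonneg _)

theorem dist_fst_le_pdist (p q : Pt n) : dist p.1 q.1 ≤ pdist p q :=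
  le_add_of_nonneg_right (Real.sqrt_nonneg _)

theorem sqrt_abs_snd_sub_le_pdist (p q : Pt n) : √|p.2 - q.2| ≤ pdist p q :=
  le_add_of_nonneg_left dist_nonneg

theorem pdist_comm (p q : Pt n) : pdist p q = pdist q p := by
  rw [pdist, pdist, dist_comm, abs_sub_comm]

theorem Real.sqrt_add_le_add_sqrt {a b : ℝ} (ha : 0 ≤ a) (hb : 0 ≤ b) : √(a + b) ≤ √a + √b :=
  Real.sqrt_le_iff.mpr ⟨by positivity, by
    nlinarith [Real.sq_sqrt ha, Real.sq_sqrt hb, Real.sqrt_nonneg a, Real.sqrt_nonneg b,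
      mul_nonneg (Real.sqrt_nonneg a) (Real.sqrt_nonneg b)]⟩

theorem pdist_triangle (p q r : Pt n) : pdist p r ≤ pdist p q + pdist q r := by
  have hspace := dist_triangle p.1 q.1 r.1
  have htime : √|p.2 - r.2| ≤ √|p.2 - q.2| + √|q.2 - r.2| :=
    (Real.sqrt_le_sqrt (abs_sub_le _ _ _)).trans
      (Real.sqrt_add_le_add_sqrt (abs_nonneg _) (abs_nonneg _))
  unfold pdist
  linarith

theorem continuous_pdist : Continuous fun z : Pt n × Pt n => pdist z.1 z.2 :=
  (continuous_fst.fst.dist continuous_snd.fst).add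
    (Real.continuous_sqrt.comp (continuous_fst.snd.sub continuous_snd.snd).abs)

theorem mem_pcyl_of_pdist_lt {p c : Pt n} {R : ℝ} (h : pdist p c < R) : p ∈ pcyl c R :=
  have hR : 0 < R := (pdist_nonneg _ _).trans_lt h
  ⟨(dist_fst_le_pdist _ _).trans_lt h,
    (Real.sqrt_lt' hR).mp ((sqrt_abs_snd_sub_le_pdist _ _).trans_lt h)⟩

theorem pdist_lt_two_mul_of_mem_pcyl {p c : Pt n} {R : ℝ} (h : p ∈ pcyl c R) :
    pdist p c < 2 * R := by
  have hR : 0 < R := dist_nonneg.trans_lt h.1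
  have htime : √|p.2 - c.2| < R := (Real.sqrt_lt' hR).mpr h.2
  unfold pdist
  linarith [h.1]

theorem mem_pcyl_add_of_pdist_lt {x y c : Pt n} {r s : ℝ} (hx : x ∈ pcyl c r)
    (hxy : pdist x y < s) : y ∈ pcyl c (r + s) := by
  have hr : 0 ≤ r := dist_nonneg.trans hx.1.le
  have hs : 0 < s := (pdist_nonneg _ _).trans_lt hxy
  have hspace : dist y.1 x.1 < s := by
    rw [dist_comm]; exact (dist_fst_le_pdist _ _).trans_lt hxy
  have htime : |x.2 - y.2| < s ^ 2 :=
    (Real.sqrt_lt' hs).mp ((sqrt_abs_snd_sub_le_pdist _ _).trans_lt hxy)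
  refine ⟨(dist_triangle _ _ _).trans_lt (by linarith [hx.1]), ?_⟩
  calc |y.2 - c.2| ≤ |x.2 - y.2| + |x.2 - c.2| := by
        rw [abs_sub_comm x.2 y.2]; exact abs_sub_le _ _ _
    _ < s ^ 2 + r ^ 2 := add_lt_add htime hx.2
    _ ≤ (r + s) ^ 2 := by nlinarith

theorem pcyl_subset_pcyl {c : Pt n} {r s : ℝ} (hrs : r ≤ s) : pcyl c r ⊆ pcyl c s := by
  intro p hp
  have hr : 0 ≤ r := dist_nonneg.trans hp.1.le
  exact ⟨hp.1.trans_le hrs, hp.2.trans_le (pow_le_pow_left₀ hr hrs 2)⟩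

theorem isOpen_pcyl (c : Pt n) (R : ℝ) : IsOpen (pcyl c R) :=
  IsOpen.inter (isOpen_lt (continuous_fst.dist continuous_const) continuous_const)
    (isOpen_lt (continuous_snd.sub continuous_const).abs continuous_const)

theorem Ahlfors.measure_le_of_pdist_lt {σ : Measure (Pt n)} {Ω : Set (Pt n)} {M R : ℝ}
    (hA : Ahlfors σ Ω M) {x₀ : Pt n} (hx₀ : x₀ ∈ frontier Ω) (hR : 0 < R) {U : Set (Pt n)}
    (hUΩ : U ⊆ frontier Ω) (hU : ∀ z ∈ U, pdist z x₀ < R) :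
    σ U ≤ ENNReal.ofReal (M * R ^ (n + 1)) :=
  (measure_mono (t := pcyl x₀ R ∩ frontier Ω) fun z hz =>
    ⟨mem_pcyl_of_pdist_lt (hU z hz), hUΩ hz⟩).trans (hA x₀ hx₀ R hR).2

theorem continuous_of_abs_sub_le_pdist {g : Pt n → ℝ} (hg : ∀ x y, |g x - g y| ≤ pdist x y) :
    Continuous g := by
  refine continuous_iff_continuousAt.mpr fun x => tendsto_iff_dist_tendsto_zero.mpr ?_
  have hpdist : Tendsto (fun y => pdist y x) (𝓝 x) (𝓝 0) := by
    have := (continuous_pdist.comp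
      (continuous_id.prodMk (continuous_const (y := x)))).tendsto x
    simpa [pdist, Function.comp_def] using this
  exact squeeze_zero (fun _ => dist_nonneg) (fun y => (Real.dist_eq _ _).trans_le (hg y x))
    hpdist

theorem abs_sub_abs_ip_le_pdist {ν : EuclideanSpace ℝ (Fin n)} (hν : ‖ν‖ ≤ 1)
    (c : EuclideanSpace ℝ (Fin n)) (x y : Pt n) :
    |(|ip (x.1 - c) ν| - |ip (y.1 - c) ν|)| ≤ pdist x y := by
  have hip : ip (x.1 - c) ν - ip (y.1 - c) ν = ip (x.1 - y.1) ν := by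
    simp only [ip, ← inner_sub_left, sub_sub_sub_cancel_right]
  calc |(|ip (x.1 - c) ν| - |ip (y.1 - c) ν|)|
      ≤ |ip (x.1 - c) ν - ip (y.1 - c) ν| := abs_abs_sub_abs_le_abs_sub _ _
    _ ≤ ‖x.1 - y.1‖ * ‖ν‖ := hip ▸ abs_real_inner_le_norm _ _
    _ ≤ ‖x.1 - y.1‖ := mul_le_of_le_one_right (norm_nonneg _) hν
    _ = dist x.1 y.1 := (dist_eq_norm _ _).symm
    _ ≤ pdist x y := dist_fst_le_pdist x y

def scaledBallKernel (g : Pt n → ℝ) (x y : Pt n) : ℝ≥0∞ :=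
  if pdist x y < g x / 8 then (ENNReal.ofReal ((g x / 8) ^ (n + 1)))⁻¹ else 0

theorem measurable_scaledBallKernel {g : Pt n → ℝ} (hg : Continuous g) :
    Measurable (Function.uncurry (scaledBallKernel g)) :=
  Measurable.ite
    (isOpen_lt continuous_pdist ((hg.comp continuous_fst).div_const 8)).measurableSet
    (ENNReal.measurable_ofReal.comp
      (((hg.comp continuous_fst).div_const 8).pow (n + 1)).measurable).inv
    measurable_const

section Kernel

variable {σ : Measure (Pt n)} {Ω : Set (Pt n)} {M : ℝ} {g : Pt n → ℝ}

theorem lintegral_scaledBallKernel_le (hA : Ahlfors σ Ω M) (hg0 : ∀ x, 0 ≤ g x)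
    (hg : ∀ x y, |g x - g y| ≤ pdist x y) (y : Pt n) :
    ∫⁻ x in frontier Ω, scaledBallKernel g x y ∂σ ≤ ENNReal.ofReal (M * (27 / 7) ^ (n + 1)) := by
  set X := {x | pdist x y < g x / 8}
  have hX : MeasurableSet X := (isOpen_lt
    (continuous_pdist.comp (continuous_id.prodMk continuous_const))
    ((continuous_of_abs_sub_le_pdist hg).div_const 8)).measurableSet
  have hcomp : ∀ x ∈ X, g y / 9 ≤ g x / 8 ∧ g x < 8 / 7 * g y := fun x hx => by
    have h := abs_le.mp (hg x y)
    have : pdist x y < g x / 8 := hx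
    constructor <;> linarith [pdist_nonneg x y]
  have hpt : ∀ x, scaledBallKernel g x y ≤
      X.indicator (fun _ => (ENNReal.ofReal ((g y / 9) ^ (n + 1)))⁻¹) x := fun x => by
    by_cases hx : x ∈ X
    · rw [scaledBallKernel, if_pos (show pdist x y < g x / 8 from hx), indicator_of_mem hx]
      exact ENNReal.inv_le_inv.mpr (ENNReal.ofReal_le_ofReal
        (pow_le_pow_left₀ (by linarith [hg0 y]) (hcomp x hx).1 _))
    · rw [scaledBallKernel, if_neg (show ¬pdist x y < g x / 8 from hx), indicator_of_notMem hx]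
  have hint : ∫⁻ x in frontier Ω, scaledBallKernel g x y ∂σ ≤
      (ENNReal.ofReal ((g y / 9) ^ (n + 1)))⁻¹ * σ (X ∩ frontier Ω) := by
    rw [← Measure.restrict_apply hX, ← lintegral_indicator_const hX]
    exact lintegral_mono hpt
  rcases (X ∩ frontier Ω).eq_empty_or_nonempty with hempty | ⟨x₀, hx₀X, hx₀⟩
  · exact hint.trans (by simp [hempty])
  have hgy : 0 < g y := by
    have : pdist x₀ y < g x₀ / 8 := hx₀X
    linarith [(hcomp x₀ hx₀X).2, pdist_nonneg x₀ y]
  have hball : σ (X ∩ frontier Ω) ≤ ENNReal.ofReal (M * (3 * g y / 7) ^ (n + 1)) :=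
    hA.measure_le_of_pdist_lt hx₀ (by positivity) inter_subset_right fun z hz => by
      have hz' : pdist z y < g z / 8 := hz.1
      have hx₀' : pdist x₀ y < g x₀ / 8 := hx₀X
      calc pdist z x₀ ≤ pdist z y + pdist x₀ y := (pdist_comm y x₀) ▸ pdist_triangle z y x₀
        _ < 3 * g y / 7 := by linarith [(hcomp z hz.1).2, (hcomp x₀ hx₀X).2]
  calc ∫⁻ x in frontier Ω, scaledBallKernel g x y ∂σ
      ≤ (ENNReal.ofReal ((g y / 9) ^ (n + 1)))⁻¹ *
          ENNReal.ofReal ((g y / 9) ^ (n + 1) * (M * (27 / 7) ^ (n + 1))) := by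
        refine hint.trans (mul_le_mul_right (hball.trans_eq ?_) _)
        rw [show 3 * g y / 7 = g y / 9 * (27 / 7) by ring, mul_pow]
        ring_nf
    _ = ENNReal.ofReal (M * (27 / 7) ^ (n + 1)) := by
        rw [ENNReal.ofReal_mul (by positivity), ← mul_assoc,
          ENNReal.inv_mul_cancel (by positivity) ENNReal.ofReal_ne_top, one_mul]

theorem ofReal_sq_le_lintegral_scaledBallKernel (hA : Ahlfors σ Ω M)
    (hg : ∀ x y, |g x - g y| ≤ pdist x y) {x q : Pt n} (hq : q ∈ frontier Ω)
    (hxq : pdist x q < g x / 16) {T : Set (Pt n)}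
    (hT : ∀ y ∈ frontier Ω, pdist x y < g x / 8 → y ∈ T) :
    ENNReal.ofReal (g x ^ 2) ≤ ENNReal.ofReal (2 * 16 ^ (n + 1)) *
      ∫⁻ y in T, scaledBallKernel g x y * ENNReal.ofReal (g y ^ 2) ∂σ := by
  have hgx : 0 < g x := by linarith [pdist_nonneg x q]
  set Y := pcyl q (g x / 64) ∩ frontier Ω
  have hY : ∀ y ∈ Y, pdist x y < g x / 8 ∧ 7 / 8 * g x ≤ g y := fun y hy => by
    have hyq := pdist_lt_two_mul_of_mem_pcyl hy.1
    have hxy : pdist x y < g x / 8 := by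
      linarith [pdist_triangle x q y, pdist_comm q y]
    exact ⟨hxy, by linarith [(abs_le.mp (hg x y)).2]⟩
  set a : ℝ := ((g x / 8) ^ (n + 1))⁻¹ * (g x ^ 2 / 2)
  have hlower : ∀ y ∈ Y, ENNReal.ofReal a ≤ scaledBallKernel g x y * ENNReal.ofReal (g y ^ 2) :=
    fun y hy => by
      rw [scaledBallKernel, if_pos (hY y hy).1, ← ENNReal.ofReal_inv_of_pos (by positivity),
        ← ENNReal.ofReal_mul (by positivity)]
      refine ENNReal.ofReal_le_ofReal (mul_le_mul_of_nonneg_left ?_ (by positivity))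
      nlinarith [(hY y hy).2]
  calc ENNReal.ofReal (g x ^ 2)
      = ENNReal.ofReal (2 * 16 ^ (n + 1)) *
          (ENNReal.ofReal a * ENNReal.ofReal ((g x / 64 / 2) ^ (n + 1))) := by
        rw [← ENNReal.ofReal_mul (by positivity), ← ENNReal.ofReal_mul (by positivity)]
        congr 1
        have h8 : (g x / 8) ^ (n + 1) ≠ 0 := by positivity
        rw [show g x / 64 / 2 = g x / 8 * (1 / 16) by ring, mul_pow, one_div_pow]
        field_simp
        simp only [a]
        field_simp
    _ ≤ ENNReal.ofReal (2 * 16 ^ (n + 1)) * (ENNReal.ofReal a * σ Y) := by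
        gcongr
        exact (hA q hq _ (by positivity)).1
    _ = ENNReal.ofReal (2 * 16 ^ (n + 1)) * ∫⁻ _ in Y, ENNReal.ofReal a ∂σ := by
        rw [setLIntegral_const]
    _ ≤ ENNReal.ofReal (2 * 16 ^ (n + 1)) *
          ∫⁻ y in Y, scaledBallKernel g x y * ENNReal.ofReal (g y ^ 2) ∂σ :=
        mul_le_mul_right (setLIntegral_mono' ((isOpen_pcyl _ _).measurableSet.inter
          isClosed_frontier.measurableSet) hlower) _
    _ ≤ ENNReal.ofReal (2 * 16 ^ (n + 1)) *
          ∫⁻ y in T, scaledBallKernel g x y * ENNReal.ofReal (g y ^ 2) ∂σ :=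
        mul_le_mul_right (lintegral_mono_set fun y hy => hT y hy.2 (hY y hy).1) _

end Kernel

theorem lintegral_lintegral_mul_le_of_lintegral_le {α β : Type*} [MeasurableSpace α]
    [MeasurableSpace β] {μ : Measure α} {ν : Measure β} [SFinite μ] [SFinite ν]
    {k : α → β → ℝ≥0∞} {f : β → ℝ≥0∞} (hk : Measurable (Function.uncurry k))
    (hf : Measurable f) {C : ℝ≥0∞} (hC : ∀ y, ∫⁻ x, k x y ∂μ ≤ C) :
    ∫⁻ x, ∫⁻ y, k x y * f y ∂ν ∂μ ≤ C * ∫⁻ y, f y ∂ν := by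
  rw [lintegral_lintegral_swap (hk.mul (hf.comp measurable_snd)).aemeasurable,
    ← lintegral_const_mul C hf]
  refine lintegral_mono fun y => ?_
  rw [lintegral_mul_const _ hk.of_uncurry_right]
  exact mul_le_mul_left (hC y) _

section Whitney

variable {ι : Type*} {B : ι → Set (Pt n)} {rad : ι → ℝ} {D : ℝ}

def whitneySum (B : ι → Set (Pt n)) (S : Set (Pt n)) (w : ι → ℝ≥0∞) (x : Pt n) : ℝ≥0∞ :=
  ∑' i : {i // (closure (B i) ∩ S).Nonempty}, (closure (B i)).indicator (fun _ => w i) x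

theorem le_whitneySum {S : Set (Pt n)} {w : ι → ℝ≥0∞} {i : ι} {x : Pt n}
    (hxB : x ∈ closure (B i)) (hxS : x ∈ S) : w i ≤ whitneySum B S w x :=
  (indicator_of_mem hxB (fun _ => w i)).symm.trans_le
    (ENNReal.le_tsum (f := fun j : {i // (closure (B i) ∩ S).Nonempty} =>
      (closure (B j)).indicator (fun _ => w j) x) ⟨i, x, hxB, hxS⟩)

theorem lintegral_whitneySum_le {σ : Measure (Pt n)} {Ω S : Set (Pt n)} {M a ρ : ℝ}
    (hA : Ahlfors σ Ω M) (hM : 0 < M) (hrad : ∀ i, 0 < rad i) (hD : 0 < D)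
    (hdiam : ∀ i, ∀ p ∈ closure (B i), ∀ q ∈ closure (B i), pdist p q ≤ D * rad i)
    (hS : S ⊆ frontier Ω) (ha : 0 < a) (hρ : 0 < ρ) :
    ∫⁻ x in S, whitneySum B S (fun i => ENNReal.ofReal (a * rad i ^ 2)) x ∂σ ≤
      ENNReal.ofReal (a * M * (2 * D) ^ (n + 1) * ρ ^ (n + 3)) *
        ∑' i : {i // (closure (B i) ∩ S).Nonempty}, ENNReal.ofReal ((rad i / ρ) ^ (n + 3)) := by
  set J := {i // (closure (B i) ∩ S).Nonempty}
  by_cases hsum : ∑' i : J, ENNReal.ofReal ((rad i / ρ) ^ (n + 3)) = ∞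
  · rw [hsum, ENNReal.mul_top (ENNReal.ofReal_pos.mpr (by positivity)).ne']
    exact le_top
  -- a finite sum of positive terms has countably many of them, so it commutes with `∫⁻`
  have : Countable J := by
    refine Set.countable_univ_iff.mp ?_
    convert Summable.countable_support_ennreal hsum
    refine (Function.support_eq_univ fun i => ?_).symm
    exact (ENNReal.ofReal_pos.mpr (pow_pos (div_pos (hrad i) hρ) _)).ne'
  unfold whitneySum
  rw [lintegral_tsum fun i =>
      (measurable_const.indicator isClosed_closure.measurableSet).aemeasurable,
    ← ENNReal.tsum_mul_left]
  refine ENNReal.tsum_le_tsum fun i => ?_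
  obtain ⟨x₀, hx₀B, hx₀S⟩ := i.2
  have hri := hrad i
  rw [lintegral_indicator_const isClosed_closure.measurableSet,
    Measure.restrict_apply isClosed_closure.measurableSet]
  calc ENNReal.ofReal (a * rad i ^ 2) * σ (closure (B i) ∩ S)
      ≤ ENNReal.ofReal (a * rad i ^ 2) * ENNReal.ofReal (M * (2 * D * rad i) ^ (n + 1)) := by
        refine mul_le_mul_right (hA.measure_le_of_pdist_lt (hS hx₀S) (by positivity)
          (inter_subset_right.trans hS) fun z hz => ?_) _
        nlinarith [hdiam i z hz.1 x₀ hx₀B]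
    _ = ENNReal.ofReal (a * M * (2 * D) ^ (n + 1) * ρ ^ (n + 3)) *
          ENNReal.ofReal ((rad i / ρ) ^ (n + 3)) := by
        rw [← ENNReal.ofReal_mul (by positivity), ← ENNReal.ofReal_mul (by positivity)]
        congr 1
        rw [div_pow]
        field_simp
        ring

end Whitney

theorem setLIntegral_inter_le_of_measure_eq {α : Type*} [MeasurableSpace α] {μ ν : Measure α}
    {S E T : Set α} {f : α → ℝ≥0∞} (hμν : ∀ A ⊆ E, μ A = ν A) (hT : S ∩ E ⊆ T) :
    ∫⁻ x in S ∩ E, f x ∂μ ≤ ∫⁻ x in T, f x ∂ν := by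
  have hrestrict : μ.restrict (S ∩ E) = ν.restrict (S ∩ E) := Measure.ext fun A hA => by
    rw [Measure.restrict_apply hA, Measure.restrict_apply hA]
    exact hμν _ (inter_subset_right.trans inter_subset_right)
  rw [hrestrict]
  exact lintegral_mono_set hT

section Comparison

variable {ι : Type*} {B : ι → Set (Pt n)} {rad : ι → ℝ} {σm σt : Measure (Pt n)}
  {Ω Ωt E : Set (Pt n)} {M D D' ρ : ℝ} {g : Pt n → ℝ} {Q : Pt n}

theorem ofReal_sq_le_whitneySum_add {S : Set (Pt n)} {x : Pt n} (hAt : Ahlfors σt Ωt M)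
    (hEΩt : E ⊆ frontier Ωt) (hcover : ∀ p : Pt n, p ∉ E → ∃ i, p ∈ closure (B i))
    (hdiam : ∀ i, ∀ p ∈ closure (B i), ∀ q ∈ closure (B i), pdist p q ≤ D * rad i)
    (hnear : ∀ i, ∃ p ∈ closure (B i), ∃ q ∈ E, pdist p q ≤ D' * rad i)
    (hg0 : ∀ x, 0 ≤ g x) (hg : ∀ x y, |g x - g y| ≤ pdist x y) (hgQ : g Q = 0)
    (hxQ : x ∈ pcyl Q ρ) (hxS : x ∈ S) (hxE : x ∉ E) :
    ENNReal.ofReal (g x ^ 2) ≤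
      whitneySum B S (fun i => ENNReal.ofReal ((16 * (D + D')) ^ 2 * rad i ^ 2)) x +
        ENNReal.ofReal (2 * 16 ^ (n + 1)) *
          ∫⁻ y in pcyl Q (3 / 2 * ρ) ∩ frontier Ωt,
            scaledBallKernel g x y * ENNReal.ofReal (g y ^ 2) ∂σt := by
  by_cases hclose : ∃ q ∈ E, pdist x q < g x / 16
  · obtain ⟨q, hqE, hxq⟩ := hclose
    refine le_add_left (ofReal_sq_le_lintegral_scaledBallKernel hAt hg (hEΩt hqE) hxq
      fun y hy hxy => ⟨?_, hy⟩)
    have hgx : g x < 2 * ρ := by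
      have := pdist_lt_two_mul_of_mem_pcyl hxQ
      linarith [(abs_le.mp (hg x Q)).2]
    rw [show 3 / 2 * ρ = ρ + ρ / 2 by ring]
    exact mem_pcyl_add_of_pdist_lt hxQ (by linarith [hg0 x])
  · push Not at hclose
    obtain ⟨i, hi⟩ := hcover x hxE
    obtain ⟨p, hp, q, hqE, hpq⟩ := hnear i
    have hgx : g x ≤ 16 * (D + D') * rad i := by
      linarith [hclose q hqE, pdist_triangle x p q, hdiam i x hi p hp]
    refine le_add_right ((ENNReal.ofReal_le_ofReal ?_).trans (le_whitneySum hi hxS))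
    rw [← mul_pow]
    exact pow_le_pow_left₀ (hg0 x) hgx 2

theorem lintegral_sq_le_of_whitney (hAm : Ahlfors σm Ω M) (hAt : Ahlfors σt Ωt M) (hM : 0 < M)
    (hE : IsClosed E) (hEsub : E ⊆ frontier Ω ∩ frontier Ωt) (hσ : ∀ A ⊆ E, σm A = σt A)
    (hrad : ∀ i, 0 < rad i) (hD : 0 < D) (hD' : 0 ≤ D')
    (hcover : ∀ p : Pt n, p ∉ E → ∃ i, p ∈ closure (B i))
    (hdiam : ∀ i, ∀ p ∈ closure (B i), ∀ q ∈ closure (B i), pdist p q ≤ D * rad i)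
    (hnear : ∀ i, ∃ p ∈ closure (B i), ∃ q ∈ E, pdist p q ≤ D' * rad i)
    (hg0 : ∀ x, 0 ≤ g x) (hg : ∀ x y, |g x - g y| ≤ pdist x y) (hQ : Q ∈ E) (hgQ : g Q = 0)
    (hρ : 0 < ρ) :
    ∫⁻ x in pcyl Q ρ ∩ frontier Ω, ENNReal.ofReal (g x ^ 2) ∂σm ≤
      ENNReal.ofReal (1 + 2 * 16 ^ (n + 1) * (M * (27 / 7) ^ (n + 1))) *
          ∫⁻ y in pcyl Q (3 / 2 * ρ) ∩ frontier Ωt, ENNReal.ofReal (g y ^ 2) ∂σt +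
        ENNReal.ofReal ((16 * (D + D')) ^ 2 * M * (2 * D) ^ (n + 1) * ρ ^ (n + 3)) *
          ∑' i : {i // (closure (B i) ∩ (pcyl Q ρ ∩ frontier Ω)).Nonempty},
            ENNReal.ofReal ((rad i / ρ) ^ (n + 3)) := by
  set A := pcyl Q ρ ∩ frontier Ω
  set T := pcyl Q (3 / 2 * ρ) ∩ frontier Ωt
  set F : Pt n → ℝ≥0∞ := fun x => ENNReal.ofReal (g x ^ 2)
  set Ψ := whitneySum B A (fun i => ENNReal.ofReal ((16 * (D + D')) ^ 2 * rad i ^ 2))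
  have hmeasA : MeasurableSet A :=
    (isOpen_pcyl Q ρ).measurableSet.inter isClosed_frontier.measurableSet
  have : IsFiniteMeasure (σm.restrict (A \ E)) := isFiniteMeasure_restrict.mpr
    ((measure_mono sdiff_subset).trans_lt
      ((hAm Q (hEsub hQ).1 ρ hρ).2.trans_lt ENNReal.ofReal_lt_top)).ne
  have : IsFiniteMeasure (σt.restrict T) := isFiniteMeasure_restrict.mpr
    ((hAt Q (hEsub hQ).2 _ (by positivity)).2.trans_lt ENNReal.ofReal_lt_top).ne
  have hgc := continuous_of_abs_sub_le_pdist hg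
  have hF : Measurable F := ENNReal.measurable_ofReal.comp (hgc.pow 2).measurable
  have hK := measurable_scaledBallKernel hgc
  have hpart_E : ∫⁻ x in A ∩ E, F x ∂σm ≤ ∫⁻ y in T, F y ∂σt :=
    setLIntegral_inter_le_of_measure_eq hσ fun z hz =>
      ⟨pcyl_subset_pcyl (by linarith) hz.1.1, (hEsub hz.2).2⟩
  have hpart_whitney : ∫⁻ x in A \ E, Ψ x ∂σm ≤
      ENNReal.ofReal ((16 * (D + D')) ^ 2 * M * (2 * D) ^ (n + 1) * ρ ^ (n + 3)) *
        ∑' i : {i // (closure (B i) ∩ A).Nonempty}, ENNReal.ofReal ((rad i / ρ) ^ (n + 3)) :=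
    (lintegral_mono_set sdiff_subset).trans
      (lintegral_whitneySum_le hAm hM hrad hD hdiam inter_subset_right (by positivity) hρ)
  have hpart_kernel : ∫⁻ x in A \ E, ∫⁻ y in T, scaledBallKernel g x y * F y ∂σt ∂σm ≤
      ENNReal.ofReal (M * (27 / 7) ^ (n + 1)) * ∫⁻ y in T, F y ∂σt :=
    lintegral_lintegral_mul_le_of_lintegral_le hK hF fun y =>
      (lintegral_mono_set (sdiff_subset.trans inter_subset_right)).trans
        (lintegral_scaledBallKernel_le hAm hg0 hg y)
  calc ∫⁻ x in A, F x ∂σm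
      = ∫⁻ x in A ∩ E, F x ∂σm + ∫⁻ x in A \ E, F x ∂σm :=
        (lintegral_inter_add_sdiff _ _ hE.measurableSet).symm
    _ ≤ ∫⁻ y in T, F y ∂σt + ∫⁻ x in A \ E, (Ψ x + ENNReal.ofReal (2 * 16 ^ (n + 1)) *
          ∫⁻ y in T, scaledBallKernel g x y * F y ∂σt) ∂σm :=
        add_le_add hpart_E (setLIntegral_mono' (hmeasA.diff hE.measurableSet) fun x hx =>
          ofReal_sq_le_whitneySum_add hAt (fun q hq => (hEsub hq).2) hcover hdiam hnear hg0 hg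
            hgQ hx.1.1 hx.1 hx.2)
    _ = ∫⁻ y in T, F y ∂σt + (∫⁻ x in A \ E, Ψ x ∂σm + ENNReal.ofReal (2 * 16 ^ (n + 1)) *
          ∫⁻ x in A \ E, ∫⁻ y in T, scaledBallKernel g x y * F y ∂σt ∂σm) := by
        have hmeas : Measurable fun x => ∫⁻ y in T, scaledBallKernel g x y * F y ∂σt :=
          (hK.mul (hF.comp measurable_snd)).lintegral_prod_right'
        rw [lintegral_add_right' _ (hmeas.const_mul _).aemeasurable,
          lintegral_const_mul' _ _ ENNReal.ofReal_ne_top]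
    _ ≤ ∫⁻ y in T, F y ∂σt +
          (ENNReal.ofReal ((16 * (D + D')) ^ 2 * M * (2 * D) ^ (n + 1) * ρ ^ (n + 3)) *
            ∑' i : {i // (closure (B i) ∩ A).Nonempty}, ENNReal.ofReal ((rad i / ρ) ^ (n + 3)) +
          ENNReal.ofReal (2 * 16 ^ (n + 1)) *
            (ENNReal.ofReal (M * (27 / 7) ^ (n + 1)) * ∫⁻ y in T, F y ∂σt)) := by
        gcongr
    _ = _ := by
        rw [ENNReal.ofReal_add zero_le_one (by positivity), ENNReal.ofReal_one,
          ENNReal.ofReal_mul (p := 2 * 16 ^ (n + 1)) (by positivity)]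
        ring

end Comparison

theorem inv_ofReal_pow_mul_le_of_le_add {a b d : ℝ≥0∞} {α β l ρ : ℝ} {k : ℕ} (hα : 0 ≤ α) (hβ : 0 ≤ β)
    (hl : 0 < l) (hρ : 0 < ρ) (h : a ≤ ENNReal.ofReal α * b + ENNReal.ofReal (β * ρ ^ k) * d) :
    (ENNReal.ofReal (ρ ^ k))⁻¹ * a ≤
      ENNReal.ofReal (α * l ^ k + β) * ((ENNReal.ofReal ((l * ρ) ^ k))⁻¹ * b + d) := by
  have hρk : 0 < ρ ^ k := by positivity
  calc (ENNReal.ofReal (ρ ^ k))⁻¹ * a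
      ≤ (ENNReal.ofReal (ρ ^ k))⁻¹ * (ENNReal.ofReal α * b + ENNReal.ofReal (β * ρ ^ k) * d) := by
        gcongr
    _ = ENNReal.ofReal (α * l ^ k) * ((ENNReal.ofReal ((l * ρ) ^ k))⁻¹ * b) +
          ENNReal.ofReal β * d := by
        rw [← ENNReal.ofReal_inv_of_pos hρk, ← ENNReal.ofReal_inv_of_pos (by positivity), mul_add,
          ← mul_assoc, ← mul_assoc, ← mul_assoc, ← ENNReal.ofReal_mul (by positivity),
          ← ENNReal.ofReal_mul (by positivity), ← ENNReal.ofReal_mul (by positivity)]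
        congr 3
        · rw [mul_pow]; field_simp
        · field_simp
    _ ≤ ENNReal.ofReal (α * l ^ k + β) * ((ENNReal.ofReal ((l * ρ) ^ k))⁻¹ * b) +
          ENNReal.ofReal (α * l ^ k + β) * d := by
        gcongr <;> linarith [mul_nonneg hα (pow_nonneg hl.le k)]
    _ = _ := (mul_add _ _ _).symm

/-- comparison of beta numbers through a Whitney decomposition.  If the
boundaries of `Ω` and of the comparison domain `Ω̃` (with Ahlfors regular surface
measures `σ`, `σ̃`) coincide, together with their surface measures, on a closed set
`E ⊆ Δ̃_1(0,0)`, and `{B i}` is a parabolic Whitney decomposition of the complement of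
`E` with radii `rad i`, then for `(Q,τ) ∈ E` and `0 < ρ < 1/2`,
`γ(Q,τ,ρ) ≤ c(γ̃(Q,τ,3ρ/2) + Σ_{i ∈ ξ(Q,τ,ρ)} (rad i/ρ)^{n+3})`. -/
theorem statement13 (n : ℕ) (M : ℝ) (N : ℕ) (hM : 1 ≤ M) :
    ∃ c : ℝ, 0 < c ∧
      ∀ (Ω Ωt : Set (Pt n)) (σm σt : Measure (Pt n)) (E : Set (Pt n))
        (ι : Type) (B : ι → Set (Pt n)) (rad : ι → ℝ),
        Ahlfors σm Ω M → Ahlfors σt Ωt M →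
        IsClosed E → E ⊆ frontier Ω ∩ frontier Ωt →
        E ⊆ pcyl (0 : Pt n) 1 →
        (∀ A : Set (Pt n), A ⊆ E → σm A = σt A) →
        (∀ i, 0 < rad i) →
        (∀ i j, i ≠ j → Disjoint (B i) (B j)) →
        (∀ p : Pt n, p ∉ E → ∃ i, p ∈ closure (B i)) →
        (∀ i, ∀ p ∈ closure (B i), ∀ q ∈ closure (B i),
          pdist p q ≤ 10 * ((n : ℝ) + 1) * rad i) →
        (∀ i, ∀ p ∈ closure (B i), ∀ q ∈ E, (10 : ℝ) ^ (5 * n) * rad i ≤ pdist p q) →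
        (∀ i, ∃ p ∈ closure (B i), ∃ q ∈ E, pdist p q ≤ (10 : ℝ) ^ (10 * n) * rad i) →
        (∀ i, Set.ncard {j | (closure (B j) ∩ closure (B i)).Nonempty} ≤ N) →
        ∀ Q ∈ E, ∀ ρ : ℝ, 0 < ρ → ρ < 1 / 2 →
          gammaE σm Ω Q ρ ≤
            ENNReal.ofReal c *
              (gammaE σt Ωt Q (3 * ρ / 2) +
                ∑' i : {i : ι // (closure (B i) ∩ (pcyl Q ρ ∩ frontier Ω)).Nonempty},
                  ENNReal.ofReal ((rad i / ρ) ^ (n + 3))) := by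
  set D : ℝ := 10 * ((n : ℝ) + 1)
  set D' : ℝ := 10 ^ (10 * n)
  have hM0 : 0 < M := one_pos.trans_le hM
  refine ⟨(1 + 2 * 16 ^ (n + 1) * (M * (27 / 7) ^ (n + 1))) * (3 / 2) ^ (n + 3) +
    (16 * (D + D')) ^ 2 * M * (2 * D) ^ (n + 1), by positivity, ?_⟩
  intro Ω Ωt σm σt E ι B rad hAm hAt hE hEsub _ hσ hrad _ hcover hdiam _ hnear _ Q hQ ρ hρ _
  have hcomparison (ν : Metric.sphere (0 : EuclideanSpace ℝ (Fin n)) 1) :=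
    lintegral_sq_le_of_whitney hAm hAt hM0 hE hEsub hσ hrad (by positivity) (by positivity)
      hcover hdiam hnear (fun _ => abs_nonneg _)
      (abs_sub_abs_ip_le_pdist (norm_eq_of_mem_sphere ν).le Q.1) hQ (by simp [ip]) hρ
  simp only [sq_abs] at hcomparison
  rw [show 3 * ρ / 2 = 3 / 2 * ρ by ring]
  unfold gammaE
  calc _ ≤ ⨅ ν : Metric.sphere (0 : EuclideanSpace ℝ (Fin n)) 1, _ := iInf_mono fun ν =>
        inv_ofReal_pow_mul_le_of_le_add (by positivity) (by positivity) (by norm_num : (0 : ℝ) < 3 / 2) hρ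
          (hcomparison ν)
    _ = _ := by
        rw [ENNReal.iInf_add,
          ENNReal.mul_iInf_of_ne (ENNReal.ofReal_pos.mpr (by positivity)).ne'
            ENNReal.ofReal_ne_top]
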